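/- Define the conjugate gradient iteration: x₀ ∈ ℝⁿ, r₀ = b − Ax₀, p₀ = r₀, and for k ≥ 0 with rₖ ≠ 0: αₖ = (rₖᵀrₖ)/(pₖᵀApₖ), x_{k+1} = xₖ + αₖpₖ, r_{k+1} = rₖ − αₖApₖ, β_{k} = (r_{k+1}ᵀr_{k+1})/(rₖᵀrₖ), p_{k+1} = r_{k+1} + βₖpₖ. Then for every k ≥ 1 with r₀, …, rₖ all nonzero, the CG iterate x_{k+1} is the unique minimizer of f over the two-dimensional affine plane xₖ + span{rₖ, p_{k−1}}; i.e., each CG step coincides with the IRM-CG step that minimizes the energy in the plane spanned by the current residual and the previous search direction. -/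

import Mathlib

/-!
Conjugate gradients keeps two invariants along the iteration: `rₖ ⬝ pₖ = rₖ ⬝ rₖ` and
`rₖ ⬝ A pₖ = pₖ ⬝ A pₖ`. From them one step yields the local relations
`r_{k+1} ⟂ rₖ`, `r_{k+1} ⟂ pₖ`, `p_{k+1} ⬝ A pₖ = 0`, and two steps yield `r_{k+1} ⟂ p_{k-1}`.
Hence the residual `b - A x_{k+1}` is orthogonal to the plane `span {rₖ, p_{k-1}}`, which also
contains `x_{k+1} - xₖ ∈ ℝ pₖ`; this Galerkin condition makes `x_{k+1}` the unique minimizer of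
the strictly convex energy on `xₖ + span {rₖ, p_{k-1}}`.
-/

open Matrix

theorem Matrix.PosDef.isSymm_of_real {ι : Type*} {A : Matrix ι ι ℝ} (hA : A.PosDef) :
    A.IsSymm := by
  rw [IsSymm, ← conjTranspose_eq_transpose_of_trivial]
  exact hA.isHermitian

variable {ι : Type*} [Fintype ι]

theorem Matrix.IsSymm.dotProduct_mulVec_comm {A : Matrix ι ι ℝ} (hA : A.IsSymm) (u v : ι → ℝ) :
    u ⬝ᵥ A *ᵥ v = v ⬝ᵥ A *ᵥ u := by
  rw [← dotProduct_transpose_mulVec, hA.eq]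

theorem Matrix.PosDef.dotProduct_mulVec_pos_of_real {A : Matrix ι ι ℝ} (hA : A.PosDef)
    {v : ι → ℝ} (hv : v ≠ 0) : 0 < v ⬝ᵥ A *ᵥ v := by
  simpa using hA.dotProduct_mulVec_pos hv

theorem dotProduct_self_ne_zero_of_real {v : ι → ℝ} (hv : v ≠ 0) : v ⬝ᵥ v ≠ 0 :=
  fun h => hv (dotProduct_self_eq_zero.mp h)

theorem dotProduct_eq_zero_of_mem_span_pair {u v w s : ι → ℝ} (hu : w ⬝ᵥ u = 0)
    (hv : w ⬝ᵥ v = 0) (hs : s ∈ Submodule.span ℝ {u, v}) : w ⬝ᵥ s = 0 := by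
  obtain ⟨c, d, rfl⟩ := Submodule.mem_span_pair.mp hs
  simp [dotProduct_add, hu, hv]

section Energy

noncomputable def quadraticEnergy (A : Matrix ι ι ℝ) (b y : ι → ℝ) : ℝ :=
  1 / 2 * (y ⬝ᵥ A *ᵥ y) - y ⬝ᵥ b

variable {A : Matrix ι ι ℝ} {b : ι → ℝ}

theorem quadraticEnergy_add (hA : A.IsSymm) (x d : ι → ℝ) :
    quadraticEnergy A b (x + d) =
      quadraticEnergy A b x + 1 / 2 * (d ⬝ᵥ A *ᵥ d) - (b - A *ᵥ x) ⬝ᵥ d := by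
  simp only [quadraticEnergy, mulVec_add, dotProduct_add, add_dotProduct, sub_dotProduct]
  rw [hA.dotProduct_mulVec_comm x d, dotProduct_comm b d, dotProduct_comm (A *ᵥ x) d]
  ring

theorem quadraticEnergy_lt_of_residual_orthogonal (hA : A.PosDef) {V : Submodule ℝ (ι → ℝ)}
    {x x' : ι → ℝ} (hx' : x' - x ∈ V) (horth : ∀ d ∈ V, (b - A *ᵥ x') ⬝ᵥ d = 0)
    {s : ι → ℝ} (hs : s ∈ V) (hne : x + s ≠ x') :
    quadraticEnergy A b x' < quadraticEnergy A b (x + s) := by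
  have hd : x + s = x' + (s - (x' - x)) := by abel
  have hdV : s - (x' - x) ∈ V := V.sub_mem hs hx'
  have hd0 : s - (x' - x) ≠ 0 := fun h => hne (by rw [hd, h, add_zero])
  rw [hd, quadraticEnergy_add hA.isSymm_of_real, horth _ hdV]
  linarith [hA.dotProduct_mulVec_pos_of_real hd0]

end Energy

section CGStep

variable {A : Matrix ι ι ℝ} {r p r' p' : ι → ℝ} {α β : ℝ}

theorem cg_residual_dotProduct_dir (hα : α * (p ⬝ᵥ A *ᵥ p) = r ⬝ᵥ r)
    (hr' : r' = r - α • A *ᵥ p) : r' ⬝ᵥ p = r ⬝ᵥ p - r ⬝ᵥ r := by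
  rw [hr', sub_dotProduct, smul_dotProduct, smul_eq_mul, dotProduct_comm (A *ᵥ p), hα]

theorem cg_residual_dotProduct_residual (hα : α * (p ⬝ᵥ A *ᵥ p) = r ⬝ᵥ r)
    (hrAp : r ⬝ᵥ A *ᵥ p = p ⬝ᵥ A *ᵥ p) (hr' : r' = r - α • A *ᵥ p) : r' ⬝ᵥ r = 0 := by
  rw [hr', sub_dotProduct, smul_dotProduct, smul_eq_mul, dotProduct_comm (A *ᵥ p), hrAp, hα,
    sub_self]

theorem cg_dir_dotProduct_mulVec_dir (hrr : r ⬝ᵥ r ≠ 0) (hα : α * (p ⬝ᵥ A *ᵥ p) = r ⬝ᵥ r)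
    (hβ : β * (r ⬝ᵥ r) = r' ⬝ᵥ r') (hr' : r' = r - α • A *ᵥ p) (hr'r : r' ⬝ᵥ r = 0)
    (hp' : p' = r' + β • p) : p' ⬝ᵥ A *ᵥ p = 0 := by
  have hα0 : α ≠ 0 := by rintro rfl; exact hrr (by rw [← hα, zero_mul])
  -- `α A p = r - r'` turns `α (r' ⬝ A p)` into `-(r' ⬝ r')`, which `α β (p ⬝ A p)` cancels.
  have hAp : α • A *ᵥ p = r - r' := by rw [hr', sub_sub_cancel]
  have hr'Ap : α * (r' ⬝ᵥ A *ᵥ p) = -(r' ⬝ᵥ r') := by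
    rw [← smul_eq_mul, ← dotProduct_smul, hAp, dotProduct_sub, hr'r, zero_sub]
  refine (mul_eq_zero.mp ?_).resolve_left hα0
  rw [hp', add_dotProduct, smul_dotProduct, smul_eq_mul, mul_add, hr'Ap, ← hβ, ← hα]
  ring

theorem cg_residual_dotProduct_next_dir (hr'p : r' ⬝ᵥ p = 0) (hp' : p' = r' + β • p) :
    r' ⬝ᵥ p' = r' ⬝ᵥ r' := by
  rw [hp', dotProduct_add, dotProduct_smul, hr'p, smul_zero, add_zero]

theorem cg_residual_dotProduct_mulVec_next_dir (hA : A.IsSymm) (hp'Ap : p' ⬝ᵥ A *ᵥ p = 0)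
    (hp' : p' = r' + β • p) : r' ⬝ᵥ A *ᵥ p' = p' ⬝ᵥ A *ᵥ p' := by
  have h := congrArg (· ⬝ᵥ A *ᵥ p') hp'
  simp only [add_dotProduct, smul_dotProduct, hA.dotProduct_mulVec_comm p p', hp'Ap, smul_zero,
    add_zero] at h
  exact h.symm

theorem cg_stepSize_mul (hA : A.PosDef) (hr : r ≠ 0) (hrp : r ⬝ᵥ p = r ⬝ᵥ r) :
    r ⬝ᵥ r / (p ⬝ᵥ A *ᵥ p) * (p ⬝ᵥ A *ᵥ p) = r ⬝ᵥ r := by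
  have hp : p ≠ 0 := by
    rintro rfl
    exact dotProduct_self_ne_zero_of_real hr (by rw [← hrp, dotProduct_zero])
  exact div_mul_cancel₀ _ (hA.dotProduct_mulVec_pos_of_real hp).ne'

end CGStep

structure IsCGIteration (A : Matrix ι ι ℝ) (b : ι → ℝ) (x r p : ℕ → ι → ℝ) : Prop where
  residual_zero : r 0 = b - A *ᵥ x 0
  dir_zero : p 0 = r 0
  iterate_succ : ∀ k, r k ≠ 0 → x (k + 1) = x k + ((r k ⬝ᵥ r k) / (p k ⬝ᵥ A *ᵥ p k)) • p k
  residual_succ : ∀ k, r k ≠ 0 →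
    r (k + 1) = r k - ((r k ⬝ᵥ r k) / (p k ⬝ᵥ A *ᵥ p k)) • A *ᵥ p k
  dir_succ : ∀ k, r k ≠ 0 →
    p (k + 1) = r (k + 1) + ((r (k + 1) ⬝ᵥ r (k + 1)) / (r k ⬝ᵥ r k)) • p k

namespace IsCGIteration

variable {A : Matrix ι ι ℝ} {b : ι → ℝ} {x r p : ℕ → ι → ℝ} {k : ℕ}

theorem residual_eq (hcg : IsCGIteration A b x r p) (hr : ∀ i < k, r i ≠ 0) :
    r k = b - A *ᵥ x k := by
  induction k with
  | zero => exact hcg.residual_zero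
  | succ k ih =>
    have hk := hr k k.lt_succ_self
    rw [hcg.residual_succ k hk, hcg.iterate_succ k hk, mulVec_add, mulVec_smul,
      ih fun i hi => hr i (hi.trans k.lt_succ_self)]
    abel

theorem step_orthogonality (hcg : IsCGIteration A b x r p) (hA : A.PosDef) (hk : r k ≠ 0)
    (hrp : r k ⬝ᵥ p k = r k ⬝ᵥ r k) (hrAp : r k ⬝ᵥ A *ᵥ p k = p k ⬝ᵥ A *ᵥ p k) :
    r (k + 1) ⬝ᵥ p k = 0 ∧ r (k + 1) ⬝ᵥ r k = 0 ∧ p (k + 1) ⬝ᵥ A *ᵥ p k = 0 := by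
  have hα := cg_stepSize_mul hA hk hrp
  have hβ := div_mul_cancel₀ (r (k + 1) ⬝ᵥ r (k + 1)) (dotProduct_self_ne_zero_of_real hk)
  have hr'r := cg_residual_dotProduct_residual hα hrAp (hcg.residual_succ k hk)
  refine ⟨?_, hr'r, ?_⟩
  · rw [cg_residual_dotProduct_dir hα (hcg.residual_succ k hk), hrp, sub_self]
  · exact cg_dir_dotProduct_mulVec_dir (dotProduct_self_ne_zero_of_real hk) hα hβ
      (hcg.residual_succ k hk) hr'r (hcg.dir_succ k hk)

theorem invariants (hcg : IsCGIteration A b x r p) (hA : A.PosDef) (hr : ∀ i < k, r i ≠ 0) :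
    r k ⬝ᵥ p k = r k ⬝ᵥ r k ∧ r k ⬝ᵥ A *ᵥ p k = p k ⬝ᵥ A *ᵥ p k := by
  induction k with
  | zero => rw [hcg.dir_zero]; exact ⟨rfl, rfl⟩
  | succ k ih =>
    have hk := hr k k.lt_succ_self
    obtain ⟨hrp, hrAp⟩ := ih fun i hi => hr i (hi.trans k.lt_succ_self)
    obtain ⟨hr'p, -, hp'Ap⟩ := hcg.step_orthogonality hA hk hrp hrAp
    exact ⟨cg_residual_dotProduct_next_dir hr'p (hcg.dir_succ k hk),
      cg_residual_dotProduct_mulVec_next_dir hA.isSymm_of_real hp'Ap (hcg.dir_succ k hk)⟩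

theorem orthogonality (hcg : IsCGIteration A b x r p) (hA : A.PosDef)
    (hr : ∀ i ≤ k, r i ≠ 0) :
    r (k + 1) ⬝ᵥ p k = 0 ∧ r (k + 1) ⬝ᵥ r k = 0 ∧ p (k + 1) ⬝ᵥ A *ᵥ p k = 0 :=
  have hinv := hcg.invariants hA fun i hi => hr i hi.le
  hcg.step_orthogonality hA (hr k le_rfl) hinv.1 hinv.2

theorem residual_succ_succ_dotProduct_dir (hcg : IsCGIteration A b x r p) (hA : A.PosDef)
    (hr : ∀ i ≤ k + 1, r i ≠ 0) : r (k + 2) ⬝ᵥ p k = 0 := by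
  obtain ⟨hr'p, -, hp'Ap⟩ := hcg.orthogonality hA fun i hi => hr i (hi.trans k.le_succ)
  rw [hcg.residual_succ (k + 1) (hr (k + 1) le_rfl), sub_dotProduct, smul_dotProduct,
    dotProduct_comm (A *ᵥ p (k + 1)), hA.isSymm_of_real.dotProduct_mulVec_comm (p k), hp'Ap,
    hr'p, smul_zero, sub_zero]

end IsCGIteration

/-- Each CG step coincides with the IRM-CG step: for `k ≥ 1` (with all residuals
`r₀, …, r_k` nonzero) the CG iterate `x_{k+1}` is the unique minimizer of the energy
`f` over the affine plane `x_k + span{r_k, p_{k−1}}` spanned by the current residual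
and the previous search direction. -/
theorem stmt15 (n : ℕ) (A : Matrix (Fin n) (Fin n) ℝ) (hA : A.PosDef)
    (b : Fin n → ℝ) (f : (Fin n → ℝ) → ℝ)
    (hf : ∀ y, f y = (1 / 2) * (y ⬝ᵥ A.mulVec y) - y ⬝ᵥ b)
    (x r p : ℕ → Fin n → ℝ)
    (hr0 : r 0 = b - A.mulVec (x 0)) (hp0 : p 0 = r 0)
    (hxrec : ∀ k : ℕ, r k ≠ 0 →
      x (k + 1) = x k + ((r k ⬝ᵥ r k) / (p k ⬝ᵥ A.mulVec (p k))) • p k)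
    (hrrec : ∀ k : ℕ, r k ≠ 0 →
      r (k + 1) = r k - ((r k ⬝ᵥ r k) / (p k ⬝ᵥ A.mulVec (p k))) • A.mulVec (p k))
    (hprec : ∀ k : ℕ, r k ≠ 0 →
      p (k + 1) = r (k + 1) + ((r (k + 1) ⬝ᵥ r (k + 1)) / (r k ⬝ᵥ r k)) • p k) :
    ∀ k : ℕ, 1 ≤ k → (∀ i ≤ k, r i ≠ 0) →
      (∃ s ∈ Submodule.span ℝ {r k, p (k - 1)}, x (k + 1) = x k + s) ∧
      (∀ s ∈ Submodule.span ℝ {r k, p (k - 1)},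
        x k + s ≠ x (k + 1) → f (x (k + 1)) < f (x k + s)) := by
  intro k hk hr
  obtain ⟨m, rfl⟩ := Nat.exists_eq_add_of_le' hk
  obtain rfl : f = quadraticEnergy A b := funext hf
  have hcg : IsCGIteration A b x r p := ⟨hr0, hp0, hxrec, hrrec, hprec⟩
  rw [Nat.add_sub_cancel]
  set V := Submodule.span ℝ {r (m + 1), p m}
  have hstep : x (m + 1 + 1) - x (m + 1) ∈ V := by
    rw [hxrec (m + 1) (hr _ le_rfl), add_sub_cancel_left]
    refine V.smul_mem _ (Submodule.mem_span_pair.mpr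
      ⟨1, r (m + 1) ⬝ᵥ r (m + 1) / (r m ⬝ᵥ r m), ?_⟩)
    rw [one_smul, hprec m (hr m m.le_succ)]
  have horth : ∀ d ∈ V, (b - A *ᵥ x (m + 1 + 1)) ⬝ᵥ d = 0 := by
    rw [← hcg.residual_eq fun i hi => hr i (Nat.le_of_lt_succ hi)]
    exact fun d => dotProduct_eq_zero_of_mem_span_pair (hcg.orthogonality hA hr).2.1
      (hcg.residual_succ_succ_dotProduct_dir hA hr)
  exact ⟨⟨_, hstep, (add_sub_cancel _ _).symm⟩,
    fun s hs hne => quadraticEnergy_lt_of_residual_orthogonal hA hstep horth hs hne⟩
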